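/- arXiv:1601.05006 — 2 statements merged into one kernel-verified Lean document; each statement's English description precedes it below -/
import Mathlib

section
/- For the Poisson bracket {x_i,x_j} = x_i x_j (i<j) and v_j = Σ_{m≤j} a_m x_m: {J_k, v_j} = J_k v_j if j ≤ 2k, and {J_k, v_j} = J_k v_{2k} if j > 2k, where J_k = (x_1 x_3 ⋯ x_{2k−1})/(x_2 x_4 ⋯ x_{2k}). -/
open Finset Real

/-- partial derivative of `f` in the `i`-th coordinate direction -/
noncomputable def pd {n : ℕ} (i : Fin n) (f : (Fin n → ℝ) → ℝ) (x : Fin n → ℝ) : ℝ :=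
  fderiv ℝ f x (Pi.single i 1)

/-- the quadratic Poisson bracket `{x_i,x_j} = x_i x_j` for `i < j` -/
noncomputable def pb {n : ℕ} (f g : (Fin n → ℝ) → ℝ) (x : Fin n → ℝ) : ℝ :=
  ∑ i : Fin n, ∑ j : Fin n,
    if i < j then x i * x j * (pd i f x * pd j g x - pd j f x * pd i g x) else 0

/-- `v a j x = a_1 x_1 + ⋯ + a_j x_j` (sum of the first `j` terms, 1-based). -/
noncomputable def v {n : ℕ} (a : Fin n → ℝ) (j : ℕ) (x : Fin n → ℝ) : ℝ :=
  ∑ k : Fin n, if (k : ℕ) < j then a k * x k else 0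

/-- right-hand side of the generalized Lotka–Volterra system -/
noncomputable def rhs {n : ℕ} (a : Fin n → ℝ) (x : Fin n → ℝ) (i : Fin n) : ℝ :=
  x i * ((∑ j : Fin n, if i < j then a j * x j else 0)
        - ∑ j : Fin n, if j < i then a j * x j else 0)

/-- `J k = (x_1 x_3 ⋯ x_{2k-1})/(x_2 x_4 ⋯ x_{2k})` (1-based indexing). -/
noncomputable def J {n : ℕ} (k : ℕ) (x : Fin n → ℝ) : ℝ :=
  ∏ m : Fin n, if (m : ℕ) < 2 * k then
    (if (m : ℕ) % 2 = 0 then x m else (x m)⁻¹) else 1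

/-- `I k = (x_{2k+2} x_{2k+4} ⋯ x_n)/(x_{2k+1} x_{2k+3} ⋯ x_{n-1})` (1-based, n even). -/
noncomputable def Ifun {n : ℕ} (k : ℕ) (x : Fin n → ℝ) : ℝ :=
  ∏ m : Fin n, if 2 * k ≤ (m : ℕ) then
    (if (m : ℕ) % 2 = 1 then x m else (x m)⁻¹) else 1

/-! `J k` is the Laurent monomial `x^e` with exponents `e = (1, -1, …, 1, -1, 0, …, 0)`. For the
log-canonical bracket, `{x^e, ∑ c_m x_m} = x^e ∑ c_m x_m (∑_{i<m} e_i - ∑_{i>m} e_i)`. Since `e`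
sums to zero, the coefficient of `c_m x_m` equals `S(m) + S(m+1)`, where `S` are the partial sums
of `e`; these are `0, 1, 0, 1, …` up to `2k` and then stay `0`, so the coefficient is `1` for
`m < 2k` and `0` beyond, which truncates `v_j` to `v_{min j 2k}`. -/

noncomputable def laurentMonomial {n : ℕ} (e : Fin n → ℤ) (y : Fin n → ℝ) : ℝ :=
  ∏ m, y m ^ e m

lemma pd_linear {n : ℕ} (c : Fin n → ℝ) (i : Fin n) (x : Fin n → ℝ) :
    pd i (fun y => ∑ m, c m * y m) x = c i := by
  have hlin : (fun y : Fin n → ℝ => ∑ m, c m * y m) =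
      ⇑(∑ m, c m • ContinuousLinearMap.proj (R := ℝ) (φ := fun _ : Fin n => ℝ) m) := by
    ext y; simp
  rw [pd, hlin, ContinuousLinearMap.fderiv]
  simp [Pi.single_apply]

lemma pd_laurentMonomial {n : ℕ} (e : Fin n → ℤ) {x : Fin n → ℝ} (hx : ∀ i, x i ≠ 0)
    (i : Fin n) :
    pd i (laurentMonomial e) x = e i * (x i)⁻¹ * laurentMonomial e x := by
  have hfactor : ∀ m ∈ (univ : Finset (Fin n)), HasFDerivAt (fun y : Fin n → ℝ => y m ^ e m)
      ((e m * x m ^ (e m - 1)) • ContinuousLinearMap.proj m) x := fun m _ =>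
    (hasDerivAt_zpow (e m) (x m) (Or.inl (hx m))).comp_hasFDerivAt (h₂ := (· ^ e m)) x
      (hasFDerivAt_apply (𝕜 := ℝ) m x)
  have hprod : HasFDerivAt (laurentMonomial e) _ x := HasFDerivAt.finsetProd hfactor
  rw [pd, hprod.fderiv, laurentMonomial, ← mul_prod_erase univ _ (mem_univ i)]
  simp only [_root_.sum_apply, smul_apply,
    ContinuousLinearMap.proj_apply, Pi.single_apply, smul_eq_mul, mul_ite, mul_one, mul_zero,
    sum_ite_eq', mem_univ, if_true, zpow_sub_one₀ (hx i)]
  ring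

theorem pb_laurentMonomial_linear {n : ℕ} (e : Fin n → ℤ) (c : Fin n → ℝ) {x : Fin n → ℝ}
    (hx : ∀ i, x i ≠ 0) :
    pb (laurentMonomial e) (fun y => ∑ m, c m * y m) x =
      laurentMonomial e x *
        ∑ m, c m * x m * ((∑ i with i < m, e i) - ∑ i with m < i, e i : ℤ) := by
  simp only [pb, pd_laurentMonomial e hx, pd_linear]
  generalize laurentMonomial e x = M
  have hterm : ∀ i m : Fin n,
      (if i < m then x i * x m * (e i * (x i)⁻¹ * M * c m - e m * (x m)⁻¹ * M * c i) else 0) =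
        M * (c m * x m * if i < m then (e i : ℝ) else 0) -
          M * (c i * x i * if i < m then (e m : ℝ) else 0) := by
    intro i m
    split_ifs
    · field_simp [hx i, hx m]
    · simp
  simp only [hterm, sum_sub_distrib]
  push_cast
  simp only [sum_filter, mul_sub, mul_sum, sum_sub_distrib]
  rw [sum_comm (f := fun i m => M * (c m * x m * if i < m then (e i : ℝ) else 0))]

def jExponent (k m : ℕ) : ℤ := if m < 2 * k then (-1) ^ m else 0

lemma J_eq_laurentMonomial {n : ℕ} (k : ℕ) :
    (J k : (Fin n → ℝ) → ℝ) = laurentMonomial fun m => jExponent k m := by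
  funext y
  refine prod_congr rfl fun m _ => ?_
  rcases Nat.even_or_odd m with h | h
  · simp [jExponent, h.neg_one_pow, Nat.even_iff.mp h]
  · simp [jExponent, h.neg_one_pow, Nat.odd_iff.mp h]

lemma sum_range_jExponent (k t : ℕ) :
    ∑ s ∈ range t, jExponent k s = if Odd (min t (2 * k)) then 1 else 0 := by
  induction t with
  | zero => simp
  | succ t ih =>
    rw [sum_range_succ, ih, jExponent]
    by_cases ht : t < 2 * k
    · rw [min_eq_left ht.le, min_eq_left ht, if_pos ht]
      rcases Nat.even_or_odd t with h | h
      · simp [h.neg_one_pow, Nat.not_odd_iff_even.mpr h, h.add_one]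
      · simp [h.neg_one_pow, h, Nat.not_odd_iff_even.mpr h.add_one]
    · rw [min_eq_right (by omega), min_eq_right (by omega), if_neg ht, add_zero]

lemma Fin.sum_filter_val_lt_eq_sum_range {M : Type*} [AddCommMonoid M] (f : ℕ → M) {n t : ℕ}
    (ht : t ≤ n) :
    ∑ i : Fin n with i.val < t, f i = ∑ s ∈ range t, f s := by
  rw [sum_filter, Fin.sum_univ_eq_sum_range (fun s => if s < t then f s else 0), ← sum_filter]
  congr 1
  ext s
  simp only [mem_filter, mem_range]
  omega

lemma sum_lt_sub_sum_gt_jExponentonent {n k : ℕ} (h2k : 2 * k ≤ n) (m : Fin n) :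
    (∑ i with i < m, jExponent k i) - ∑ i with m < i, jExponent k i =
      if (m : ℕ) < 2 * k then 1 else 0 := by
  have hsplit : ∑ i with m < i, jExponent k i =
      ∑ i : Fin n, jExponent k i - ∑ i : Fin n with i.val < m.val + 1, jExponent k i := by
    rw [eq_sub_iff_add_eq, add_comm,
      ← sum_filter_add_sum_filter_not univ (fun i : Fin n => i.val < m.val + 1)]
    congr 2
    ext i
    simp only [mem_filter, mem_univ, true_and, not_lt, Fin.lt_def]
    omega
  have htotal : ∑ i : Fin n, jExponent k i = 0 := by
    rw [Fin.sum_univ_eq_sum_range (jExponent k), sum_range_jExponent, min_eq_right h2k]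
    simp
  rw [hsplit, htotal, zero_sub, sub_neg_eq_add]
  simp only [Fin.lt_def]
  rw [Fin.sum_filter_val_lt_eq_sum_range _ m.isLt.le,
    Fin.sum_filter_val_lt_eq_sum_range (t := m + 1) _ m.isLt, sum_range_jExponent,
    sum_range_jExponent]
  by_cases hm : (m : ℕ) < 2 * k
  · rw [min_eq_left hm.le, min_eq_left hm, if_pos hm]
    rcases Nat.even_or_odd (m : ℕ) with h | h
    · simp [Nat.not_odd_iff_even.mpr h, h.add_one]
    · simp [h, Nat.not_odd_iff_even.mpr h.add_one]
  · rw [min_eq_right (by omega), min_eq_right (by omega), if_neg hm]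
    simp

lemma v_eq_linear {n : ℕ} (a : Fin n → ℝ) (j : ℕ) :
    v a j = fun y => ∑ m : Fin n, (if (m : ℕ) < j then a m else 0) * y m := by
  funext y
  simp only [v, ite_mul, zero_mul]

theorem J_v_bracket_general (n : ℕ) (a : Fin n → ℝ) (k : ℕ)
    (hk2 : k ≤ n / 2) (j : ℕ)
    (x : Fin n → ℝ) (hx : ∀ i, x i ≠ 0) :
    pb (J k) (v a j) x =
      if j ≤ 2 * k then J k x * v a j x else J k x * v a (2 * k) x := by
  have h2k : 2 * k ≤ n := by omega
  have hv : ∑ m : Fin n, (if (m : ℕ) < j then a m else 0) * x m *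
      ((if (m : ℕ) < 2 * k then 1 else 0 : ℤ) : ℝ) = v a (min j (2 * k)) x := by
    simp only [v, lt_min_iff]
    refine sum_congr rfl fun m _ => ?_
    split_ifs <;> simp_all
  have hbracket : pb (J k) (v a j) x = J k x * v a (min j (2 * k)) x := by
    conv_lhs => rw [J_eq_laurentMonomial, v_eq_linear, pb_laurentMonomial_linear _ _ hx]
    simp only [sum_lt_sub_sum_gt_jExponentonent h2k, hv, J_eq_laurentMonomial]
  rw [hbracket]
  split_ifs with hj
  · rw [min_eq_left hj]
  · rw [min_eq_right (by omega)]

/-- `{J_k, v_j} = J_k v_j` for `j ≤ 2k` and `{J_k, v_j} = J_k v_{2k}`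
for `j > 2k`. -/
theorem J_v_bracket (n : ℕ) (a : Fin n → ℝ) (k : ℕ)
    (hk1 : 1 ≤ k) (hk2 : k ≤ n / 2) (j : ℕ) (hj : j ≤ n)
    (x : Fin n → ℝ) (hx : ∀ i, x i ≠ 0) :
    pb (J k) (v a j) x =
      if j ≤ 2 * k then J k x * v a j x else J k x * v a (2 * k) x :=
  J_v_bracket_general n a k hk2 j x hx
end

section
/- The Kahan map x̃_i = x_i (1 − εH)(1 + εH) / [(1 − εH + 2ε v_{i−1})(1 − εH + 2ε v_i)] satisfies the Kahan discretization equations x̃_i − x_i = ε x_i(H − ṽ_i − ṽ_{i−1}) + ε x̃_i(H − v_i − v_{i−1}), where ṽ_j = Σ_{k≤j} a_k x̃_k; moreover ṽ_j = v_j (1 + εH)/(1 − εH + 2ε v_j) and H̃ := ṽ_n = H. -/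
open Finset Real

/-- the Kahan map of the generalized Lotka–Volterra system -/
noncomputable def kahan {n : ℕ} (a : Fin n → ℝ) (ε : ℝ) (x : Fin n → ℝ) (i : Fin n) : ℝ :=
  x i * ((1 - ε * v a n x) * (1 + ε * v a n x)) /
    ((1 - ε * v a n x + 2 * ε * v a (i : ℕ) x)
      * (1 - ε * v a n x + 2 * ε * v a ((i : ℕ) + 1) x))

/-!
With `D_j = 1 - εH + 2ε v_j` one has `D_{j+1} - D_j = 2ε a_j x_j`, so
`a_j x̃_j = (1 - ε²H²)(D_{j+1} - D_j) / (2ε D_j D_{j+1})` telescopes and the partial sums of the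
image are `ṽ_j = v_j (1 + εH) / D_j`. Since `D_n = 1 + εH`, this gives `H̃ = H`, and once `ṽ` is
known in closed form the discretization equations are a rational identity in `x_i, v_{i-1}, v_i, H`.
-/

lemma v_zero {n : ℕ} (a x : Fin n → ℝ) : v a 0 x = 0 := by
  simp [v]

lemma v_succ {n : ℕ} (a x : Fin n → ℝ) (j : ℕ) (hj : j < n) :
    v a (j + 1) x = v a j x + a ⟨j, hj⟩ * x ⟨j, hj⟩ := by
  have split_last : ∀ k : Fin n, (if (k : ℕ) < j + 1 then a k * x k else 0) =
      (if (k : ℕ) < j then a k * x k else 0) + (if k = ⟨j, hj⟩ then a k * x k else 0) := by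
    intro k
    split_ifs <;> simp_all [Fin.ext_iff] <;> omega
  simp only [v, split_last, Finset.sum_add_distrib, Finset.sum_ite_eq', Finset.mem_univ, if_true]

lemma kahan_partialSum_step (ε H v w : ℝ)
    (hv : 1 - ε * H + 2 * ε * v ≠ 0) (hw : 1 - ε * H + 2 * ε * w ≠ 0) :
    v * (1 + ε * H) / (1 - ε * H + 2 * ε * v)
      + (w - v) * ((1 - ε * H) * (1 + ε * H)) /
          ((1 - ε * H + 2 * ε * v) * (1 - ε * H + 2 * ε * w))
    = w * (1 + ε * H) / (1 - ε * H + 2 * ε * w) := by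
  rw [div_add_div _ _ hv (mul_ne_zero hv hw), div_eq_div_iff (mul_ne_zero hv (mul_ne_zero hv hw)) hw]
  ring

lemma kahan_equation_of_partialSums (ε H v w y : ℝ)
    (hv : 1 - ε * H + 2 * ε * v ≠ 0) (hw : 1 - ε * H + 2 * ε * w ≠ 0) :
    y * ((1 - ε * H) * (1 + ε * H)) / ((1 - ε * H + 2 * ε * v) * (1 - ε * H + 2 * ε * w)) - y =
      ε * y * (H - w * (1 + ε * H) / (1 - ε * H + 2 * ε * w)
                  - v * (1 + ε * H) / (1 - ε * H + 2 * ε * v))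
      + ε * (y * ((1 - ε * H) * (1 + ε * H)) /
            ((1 - ε * H + 2 * ε * v) * (1 - ε * H + 2 * ε * w))) * (H - w - v) := by
  generalize hdv : 1 - ε * H + 2 * ε * v = dv at *
  generalize hdw : 1 - ε * H + 2 * ε * w = dw at *
  field_simp
  subst hdv hdw
  ring

section KahanMap

variable {n : ℕ} {a : Fin n → ℝ} {ε : ℝ} {x : Fin n → ℝ}

lemma v_kahan (hden : ∀ j : ℕ, j ≤ n → 1 - ε * v a n x + 2 * ε * v a j x ≠ 0) {j : ℕ}
    (hj : j ≤ n) : v a j (kahan a ε x) =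
      v a j x * (1 + ε * v a n x) / (1 - ε * v a n x + 2 * ε * v a j x) := by
  induction j with
  | zero => simp [v_zero]
  | succ j ih =>
    have hjn : j < n := hj
    rw [v_succ a _ j hjn, ih hjn.le,
      ← kahan_partialSum_step ε (v a n x) _ _ (hden j hjn.le) (hden (j + 1) hj)]
    congr 1
    rw [kahan, v_succ a x j hjn]
    ring

lemma v_kahan_self (hden : ∀ j : ℕ, j ≤ n → 1 - ε * v a n x + 2 * ε * v a j x ≠ 0) :
    v a n (kahan a ε x) = v a n x := by
  have hplus : 1 - ε * v a n x + 2 * ε * v a n x = 1 + ε * v a n x := by ring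
  rw [v_kahan hden le_rfl, hplus, mul_div_assoc, div_self (hplus ▸ hden n le_rfl), mul_one]

lemma kahan_sub_self (hden : ∀ j : ℕ, j ≤ n → 1 - ε * v a n x + 2 * ε * v a j x ≠ 0)
    (i : Fin n) : kahan a ε x i - x i =
      ε * x i * (v a n x - v a ((i : ℕ) + 1) (kahan a ε x) - v a (i : ℕ) (kahan a ε x))
      + ε * kahan a ε x i * (v a n x - v a ((i : ℕ) + 1) x - v a (i : ℕ) x) := by
  rw [v_kahan hden i.isLt.le, v_kahan hden i.isLt]
  exact kahan_equation_of_partialSums ε _ _ _ (x i) (hden i i.isLt.le) (hden (i + 1) i.isLt)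

end KahanMap

theorem kahan_discretization_general (n : ℕ) (a : Fin n → ℝ) (ε : ℝ)
    (x : Fin n → ℝ)
    (hden : ∀ j : ℕ, j ≤ n → 1 - ε * v a n x + 2 * ε * v a j x ≠ 0) :
    (∀ j : ℕ, j ≤ n → v a j (kahan a ε x) =
      v a j x * (1 + ε * v a n x) / (1 - ε * v a n x + 2 * ε * v a j x)) ∧
    v a n (kahan a ε x) = v a n x ∧
    (∀ i : Fin n, kahan a ε x i - x i =
      ε * x i * (v a n x - v a ((i : ℕ) + 1) (kahan a ε x) - v a (i : ℕ) (kahan a ε x))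
      + ε * kahan a ε x i * (v a n x - v a ((i : ℕ) + 1) x - v a (i : ℕ) x)) :=
  ⟨fun _ hj => v_kahan hden hj, v_kahan_self hden, kahan_sub_self hden⟩

/-- the Kahan map satisfies the Kahan discretization equations,
`ṽ_j = v_j (1 + εH)/(1 − εH + 2ε v_j)`, and preserves `H`. -/
theorem kahan_discretization (n : ℕ) (a : Fin n → ℝ) (ε : ℝ) (hε : 0 < ε)
    (x : Fin n → ℝ)
    (hden : ∀ j : ℕ, j ≤ n → 1 - ε * v a n x + 2 * ε * v a j x ≠ 0)
    (hH : 1 - ε ^ 2 * (v a n x) ^ 2 ≠ 0) :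
    (∀ j : ℕ, j ≤ n → v a j (kahan a ε x) =
      v a j x * (1 + ε * v a n x) / (1 - ε * v a n x + 2 * ε * v a j x)) ∧
    v a n (kahan a ε x) = v a n x ∧
    (∀ i : Fin n, kahan a ε x i - x i =
      ε * x i * (v a n x - v a ((i : ℕ) + 1) (kahan a ε x) - v a (i : ℕ) (kahan a ε x))
      + ε * kahan a ε x i * (v a n x - v a ((i : ℕ) + 1) x - v a (i : ℕ) x)) :=
  kahan_discretization_general n a ε x hden
end
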